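/- Let G be the group of finitely supported functions ℤ × ℤ → ℤ/2ℤ under pointwise addition, and for a finite set F ⊆ ℤ × ℤ let e_F ∈ G denote the indicator function of F. Let S_□ := {e_F : F = {(n, m), (n + d, m), (n, m + d), (n + d, m + d)} for some n, m ∈ ℤ and d ≥ 1}. Then S_□ is a set of Bohr recurrence in G. -/

import Mathlib

open Pointwise

/-- `S` is a set of Bohr recurrence: for every `d`, every homomorphism `ρ : G → 𝕋^d`, and
every `ε > 0`, there is `s ∈ S` with `‖ρ(s)‖ < ε` (max over coordinates of the distance
to the nearest integer). -/
def BohrRecurrent {G : Type*} [AddCommGroup G] (S : Set G) : Prop :=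
  ∀ (d : ℕ) (ρ : G →+ (Fin d → AddCircle (1 : ℝ))) (ε : ℝ), 0 < ε →
    ∃ s ∈ S, ∀ i : Fin d, ‖ρ s i‖ < ε

/-- `S` is a set of chromatic recurrence: for every `r` and every `f : G → {1,…,r}` there
are `a, b ∈ G` with `f a = f b` and `b - a ∈ S`. -/
def ChromaticRecurrent {G : Type*} [AddCommGroup G] (S : Set G) : Prop :=
  ∀ (r : ℕ) (f : G → Fin r), ∃ a b : G, f a = f b ∧ b - a ∈ S

/-- `χ : G → ℂ` is a character: a homomorphism into the unit circle. -/
def IsChar {G : Type*} [AddCommGroup G] (χ : G → ℂ) : Prop :=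
  (∀ g, ‖χ g‖ = 1) ∧ ∀ a b, χ (a + b) = χ a * χ b

/-- A trigonometric polynomial: a finite linear combination of characters. -/
def IsTrigPoly {G : Type*} [AddCommGroup G] (p : G → ℂ) : Prop :=
  ∃ (n : ℕ) (c : Fin n → ℂ) (χ : Fin n → G → ℂ),
    (∀ i, IsChar (χ i)) ∧ ∀ g, p g = ∑ i, c i * χ i g

/-- `ψ` is almost periodic: a uniform limit of trigonometric polynomials. -/
def IsAlmostPeriodic {G : Type*} [AddCommGroup G] (ψ : G → ℂ) : Prop :=
  ∀ ε : ℝ, 0 < ε → ∃ p : G → ℂ, IsTrigPoly p ∧ ∀ g, ‖ψ g - p g‖ ≤ ε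

/-- `E` is an `I₀` set: every bounded function on `E` is the restriction of an almost
periodic function on `G`. -/
def IsI0Set {G : Type*} [AddCommGroup G] (E : Set G) : Prop :=
  ∀ f : G → ℂ, (∃ C : ℝ, ∀ x ∈ E, ‖f x‖ ≤ C) →
    ∃ ψ : G → ℂ, IsAlmostPeriodic ψ ∧ ∀ x ∈ E, ψ x = f x

/-- `B` is a Bohr neighborhood of `0`. -/
def IsBohrNhdZero {G : Type*} [AddCommGroup G] (B : Set G) : Prop :=
  ∃ (d : ℕ) (ρ : G →+ (Fin d → AddCircle (1 : ℝ))) (V : Set (Fin d → AddCircle (1 : ℝ))),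
    IsOpen V ∧ (0 : Fin d → AddCircle (1 : ℝ)) ∈ V ∧ ρ ⁻¹' V ⊆ B

/-- `Δ₂(A) = {(a-b)-(c-d) : a,b,c,d ∈ A mutually distinct}`. -/
def Delta2 {G : Type*} [AddCommGroup G] (A : Set G) : Set G :=
  {x | ∃ a b c d : G, a ∈ A ∧ b ∈ A ∧ c ∈ A ∧ d ∈ A ∧
    a ≠ b ∧ a ≠ c ∧ a ≠ d ∧ b ≠ c ∧ b ≠ d ∧ c ≠ d ∧ x = (a - b) - (c - d)}

/-- The vertex set `{(n,m), (n+d,m), (n,m+d), (n+d,m+d)}` of an axis-parallel square. -/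
def squareVerts (n m e : ℤ) : Finset (ℤ × ℤ) :=
  {(n, m), (n + e, m), (n, m + e), (n + e, m + e)}

/-- `e_F ∈ ⨁_{ℤ × ℤ} ℤ/2ℤ`: the indicator function of the finite set `F ⊆ ℤ × ℤ`. -/
noncomputable def eF2 (F : Finset (ℤ × ℤ)) : (ℤ × ℤ) →₀ ZMod 2 :=
  ∑ x ∈ F, Finsupp.single x (1 : ZMod 2)

/-! Each `ρ (e_x)` is `2`-torsion in `𝕋^d`, so each of its coordinates is `0` or `1/2` and
`ρ (e_x)` is determined by the set of coordinates where it vanishes. Colouring `ℤ²` by this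
finite datum, Gallai's theorem (the multidimensional van der Waerden theorem) gives a
monochromatic square; its four vertices share one image `v`, so `ρ (e_F) = 4 • v = 0`. -/

theorem AddCircle.eq_half_period_of_add_self_eq_zero {p : ℝ} {y : AddCircle p}
    (h : y + y = 0) (h0 : y ≠ 0) : y = ↑(p / 2) := by
  induction y using QuotientAddGroup.induction_on with
  | H r =>
    obtain ⟨n, hn⟩ := (AddCircle.coe_eq_zero_iff p).1 (by rw [AddCircle.coe_add]; exact h)
    rw [zsmul_eq_mul] at hn
    rcases Int.even_or_odd' n with ⟨k, rfl | rfl⟩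
    · refine absurd ((AddCircle.coe_eq_zero_iff p).2 ⟨k, ?_⟩) h0
      push_cast at hn
      rw [zsmul_eq_mul]
      linarith
    · rw [← sub_eq_zero, ← AddCircle.coe_sub, AddCircle.coe_eq_zero_iff]
      refine ⟨k, ?_⟩
      push_cast at hn
      rw [zsmul_eq_mul]
      linarith

theorem AddCircle.pi_eq_of_add_self_eq_zero {ι : Type*} {p : ℝ} {y z : ι → AddCircle p}
    (hy : y + y = 0) (hz : z + z = 0) (h : ∀ i, y i = 0 ↔ z i = 0) : y = z := by
  funext i
  by_cases hyi : y i = 0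
  · rw [hyi, eq_comm, ← h, hyi]
  · rw [eq_half_period_of_add_self_eq_zero (congrFun hy i) hyi,
      eq_half_period_of_add_self_eq_zero (congrFun hz i) ((h i).not.1 hyi)]

theorem map_single_one_add_self {α A : Type*} [AddCommGroup A] (ρ : (α →₀ ZMod 2) →+ A)
    (x : α) : ρ (Finsupp.single x 1) + ρ (Finsupp.single x 1) = 0 := by
  rw [← map_add, ← Finsupp.single_add, show (1 : ZMod 2) + 1 = 0 by decide,
    Finsupp.single_zero, map_zero]

theorem map_eF2_eq_zero_of_even_card {A : Type*} [AddCommGroup A]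
    (ρ : ((ℤ × ℤ) →₀ ZMod 2) →+ A) {F : Finset (ℤ × ℤ)} {v : A} (hF : Even F.card)
    (hv : ∀ x ∈ F, ρ (Finsupp.single x 1) = v) : ρ (eF2 F) = 0 := by
  rcases F.eq_empty_or_nonempty with rfl | ⟨x, hx⟩
  · simp [eF2]
  · obtain ⟨k, hk⟩ := hF
    rw [eF2, map_sum, Finset.sum_congr rfl hv, Finset.sum_const, hk, add_nsmul, ← nsmul_add,
      ← hv x hx, map_single_one_add_self, nsmul_zero]

theorem card_squareVerts (n m : ℤ) {e : ℤ} (he : e ≠ 0) : (squareVerts n m e).card = 4 := by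
  simp [squareVerts, Finset.card_insert_of_notMem, Prod.ext_iff, he]

theorem exists_mono_squareVerts {κ : Type*} [Finite κ] (C : ℤ × ℤ → κ) :
    ∃ n m e : ℤ, 1 ≤ e ∧ ∀ x ∈ squareVerts n m e, C x = C (n, m) := by
  obtain ⟨a, ha, ⟨n, m⟩, c, hc⟩ :=
    Combinatorics.exists_mono_homothetic_copy ({(0, 0), (1, 0), (0, 1), (1, 1)} : Finset _) C
  have corner : ∀ i j : ℤ, (i, j) ∈ ({(0, 0), (1, 0), (0, 1), (1, 1)} : Finset (ℤ × ℤ)) →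
      C (n + a * i, m + a * j) = c := by
    intro i j hij
    simpa [add_comm, nsmul_eq_mul] using hc (i, j) hij
  refine ⟨n, m, a, by omega, fun x hx => ?_⟩
  have h00 := corner 0 0 (by simp)
  simp only [mul_zero, add_zero] at h00
  rw [h00]
  simp only [squareVerts, Finset.mem_insert, Finset.mem_singleton] at hx
  rcases hx with rfl | rfl | rfl | rfl
  · exact h00
  · simpa using corner 1 0 (by simp)
  · simpa using corner 0 1 (by simp)
  · simpa using corner 1 1 (by simp)

/-- The set `S_□` of indicator functions of vertex sets of axis-parallel squares is a set
of Bohr recurrence in the group of finitely supported functions `ℤ × ℤ → ℤ/2ℤ`. -/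
theorem stmt_16 :
    BohrRecurrent {s : (ℤ × ℤ) →₀ ZMod 2 |
      ∃ n m d : ℤ, 1 ≤ d ∧ s = eF2 (squareVerts n m d)} := by
  intro d ρ ε hε
  set c : ℤ × ℤ → Fin d → AddCircle (1 : ℝ) := fun x => ρ (Finsupp.single x 1)
  obtain ⟨n, m, e, he, hmono⟩ := exists_mono_squareVerts fun x i => c x i = 0
  have hsquare : ρ (eF2 (squareVerts n m e)) = 0 := by
    exact map_eF2_eq_zero_of_even_card ρ (by rw [card_squareVerts n m (by omega)]; decide)
      fun x hx => AddCircle.pi_eq_of_add_self_eq_zero (map_single_one_add_self ρ x)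
        (map_single_one_add_self ρ (n, m)) fun i => Iff.of_eq (congrFun (hmono x hx) i)
  exact ⟨_, ⟨n, m, e, he, rfl⟩, fun i => by simpa [hsquare] using hε⟩
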